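/- Let X₁, ..., X_n be independent random variables where Xᵢ has a continuous distribution with CDF Fᵢ(x) = exp(-e^{-(x-μᵢ)}) (Gumbel with location μᵢ and scale 1). Then P[X_j = max_i X_i] = e^{μ_j} / Σᵢ e^{μᵢ}. -/

import Mathlib

open MeasureTheory ProbabilityTheory Set Filter Topology

noncomputable def gCdf (c x : ℝ) : ℝ := Real.exp (-(c * Real.exp (-x)))
noncomputable def gPdf (c x : ℝ) : ℝ := c * Real.exp (-x) * Real.exp (-(c * Real.exp (-x)))

lemma gPdf_nonneg {c : ℝ} (hc : 0 ≤ c) (x : ℝ) : 0 ≤ gPdf c x := by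
  unfold gPdf; positivity

lemma continuous_gPdf (c : ℝ) : Continuous (gPdf c) := by
  unfold gPdf; fun_prop

lemma hasDerivAt_gCdf (c x : ℝ) : HasDerivAt (gCdf c) (gPdf c x) x := by
  have h : HasDerivAt (fun x : ℝ => -(c * Real.exp (-x))) (c * Real.exp (-x)) x := by
    exact ((((Real.hasDerivAt_exp (-x)).comp x (hasDerivAt_neg x)).const_mul c).neg).congr_deriv (by ring)
  show HasDerivAt (fun x => Real.exp (-(c * Real.exp (-x)))) (gPdf c x) x
  simpa [gPdf, mul_comm] using h.exp

lemma gPdf_le_left {c : ℝ} (hc : 0 < c) (x : ℝ) : gPdf c x ≤ 4 / c * Real.exp x := by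
  set u := c * Real.exp (-x) with hu
  have hupos : 0 < u := by positivity
  have h2 : u ^ 2 / 4 ≤ Real.exp u := by
    have h1 : u / 2 ≤ Real.exp (u / 2) := by
      have := Real.add_one_le_exp (u / 2); linarith
    have := mul_le_mul h1 h1 (by positivity) (Real.exp_pos _).le
    calc u ^ 2 / 4 = (u / 2) * (u / 2) := by ring
      _ ≤ Real.exp (u / 2) * Real.exp (u / 2) := this
      _ = Real.exp u := by rw [← Real.exp_add]; ring_nf
  have hexp : Real.exp (-u) ≤ 4 / u ^ 2 := by
    rw [Real.exp_neg]
    calc (Real.exp u)⁻¹ ≤ (u ^ 2 / 4)⁻¹ := inv_anti₀ (by positivity) h2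
      _ = 4 / u ^ 2 := by rw [inv_div]
  have hrw : gPdf c x = u * Real.exp (-u) := by rw [gPdf]
  rw [hrw]
  calc u * Real.exp (-u) ≤ u * (4 / u ^ 2) := by
        exact mul_le_mul_of_nonneg_left hexp hupos.le
    _ = 4 / u := by field_simp
    _ = 4 / c * Real.exp x := by
        rw [hu, Real.exp_neg]; field_simp

lemma gPdf_le_right {c : ℝ} (hc : 0 < c) (x : ℝ) : gPdf c x ≤ c * Real.exp (-x) := by
  unfold gPdf
  have h1 : Real.exp (-(c * Real.exp (-x))) ≤ 1 :=
    Real.exp_le_one_iff.mpr (by simp; positivity)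
  exact mul_le_of_le_one_right (by positivity) h1

lemma integrable_gPdf {c : ℝ} (hc : 0 < c) : Integrable (gPdf c) := by
  rw [← integrableOn_univ, ← Set.Iic_union_Ioi (a := (0:ℝ))]
  apply IntegrableOn.union
  · have hg : IntegrableOn (fun x => 4 / c * Real.exp x) (Iic (0:ℝ)) :=
      (integrableOn_exp_Iic 0).const_mul _
    refine Integrable.mono' hg ((continuous_gPdf c).aestronglyMeasurable) ?_
    refine Filter.Eventually.of_forall fun x => ?_
    rw [Real.norm_of_nonneg (gPdf_nonneg hc.le x)]
    exact gPdf_le_left hc x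
  · have hg : IntegrableOn (fun x : ℝ => c * Real.exp (-1 * x)) (Ioi (0:ℝ)) :=
      (exp_neg_integrableOn_Ioi 0 one_pos).const_mul _
    refine Integrable.mono' hg ((continuous_gPdf c).aestronglyMeasurable) ?_
    refine Filter.Eventually.of_forall fun x => ?_
    rw [Real.norm_of_nonneg (gPdf_nonneg hc.le x)]
    simpa using gPdf_le_right hc x

lemma tendsto_gCdf_atTop (c : ℝ) : Tendsto (gCdf c) atTop (𝓝 1) := by
  have h : Tendsto (fun x : ℝ => -(c * Real.exp (-x))) atTop (𝓝 0) := by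
    simpa using ((Real.tendsto_exp_neg_atTop_nhds_zero.const_mul c).neg)
  have := (Real.continuous_exp.tendsto 0).comp h
  rw [Real.exp_zero] at this; exact this

lemma tendsto_gCdf_atBot {c : ℝ} (hc : 0 < c) : Tendsto (gCdf c) atBot (𝓝 0) := by
  have h1 : Tendsto (fun x : ℝ => Real.exp (-x)) atBot atTop :=
    Real.tendsto_exp_atTop.comp tendsto_neg_atBot_atTop
  have h2 : Tendsto (fun x : ℝ => -(c * Real.exp (-x))) atBot atBot :=
    tendsto_neg_atTop_atBot.comp (h1.const_mul_atTop hc)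
  exact Real.tendsto_exp_atBot.comp h2

lemma integral_gPdf {c : ℝ} (hc : 0 < c) : ∫ x, gPdf c x = 1 := by
  have := MeasureTheory.integral_of_hasDerivAt_of_tendsto
    (fun x => hasDerivAt_gCdf c x) (integrable_gPdf hc)
    (tendsto_gCdf_atBot hc) (tendsto_gCdf_atTop c)
  simpa using this

lemma integral_Iic_gPdf {c : ℝ} (hc : 0 < c) (a : ℝ) :
    ∫ x in Iic a, gPdf c x = gCdf c a := by
  have := MeasureTheory.integral_Iic_of_hasDerivAt_of_tendsto' (a := a)
    (fun x _ => hasDerivAt_gCdf c x) (integrable_gPdf hc).integrableOn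
    (tendsto_gCdf_atBot hc)
  simpa using this

lemma gCdf_prod {ι : Type*} (s : Finset ι) (c : ι → ℝ) (x : ℝ) :
    ∏ i ∈ s, gCdf (c i) x = gCdf (∑ i ∈ s, c i) x := by
  simp only [gCdf, ← Real.exp_sum]
  congr 1
  rw [Finset.sum_mul, ← Finset.sum_neg_distrib]

lemma gPdf_mul_gCdf {b c : ℝ} (hb : 0 ≤ b) (hc : 0 < c) (x : ℝ) :
    gPdf c x * gCdf b x = c / (b + c) * gPdf (b + c) x := by
  have hbc : b + c ≠ 0 := by positivity
  unfold gPdf gCdf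
  rw [mul_assoc, ← Real.exp_add]
  field_simp
  congr 1
  ring
lemma gCdf_nonneg (c x : ℝ) : 0 ≤ gCdf c x := by unfold gCdf; positivity

lemma continuous_gCdf (c : ℝ) : Continuous (gCdf c) := by unfold gCdf; fun_prop

lemma gumbel_measure_eq {c : ℝ} (hc : 0 < c) (ν : Measure ℝ) [IsProbabilityMeasure ν]
    (h : ∀ x, ν (Iic x) = ENNReal.ofReal (gCdf c x)) :
    ν = volume.withDensity (fun x => ENNReal.ofReal (gPdf c x)) := by
  have hwda : ∀ s : Set ℝ, MeasurableSet s →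
      (volume.withDensity fun x => ENNReal.ofReal (gPdf c x)) s
        = ENNReal.ofReal (∫ x in s, gPdf c x) := by
    intro s hs
    rw [withDensity_apply _ hs,
      ← ofReal_integral_eq_lintegral_ofReal (integrable_gPdf hc).integrableOn
        (Filter.Eventually.of_forall fun x => gPdf_nonneg hc.le x)]
  have hfin : IsFiniteMeasure (volume.withDensity fun x => ENNReal.ofReal (gPdf c x)) := by
    constructor
    rw [hwda univ MeasurableSet.univ]
    exact ENNReal.ofReal_lt_top
  refine Measure.ext_of_Iic ν _ fun a => ?_
  rw [h a, hwda (Iic a) measurableSet_Iic, integral_Iic_gPdf hc a]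

/-- Gumbel-max: for independent unit-scale Gumbel variables with locations μᵢ,
the probability that index j attains the maximum is `exp μⱼ / ∑ᵢ exp μᵢ`. -/
theorem gumbel_max_trick
    {Ω : Type*} [MeasureSpace Ω] [IsProbabilityMeasure (ℙ : Measure Ω)]
    {n : ℕ} (X : Fin n → Ω → ℝ) (μ : Fin n → ℝ)
    (hmeas : ∀ i, Measurable (X i))
    (hindep : iIndepFun X ℙ)
    (hcdf : ∀ i, ∀ x : ℝ, (ℙ (X i ⁻¹' Set.Iic x)).toReal =
      Real.exp (-Real.exp (-(x - μ i))))
    (j : Fin n) :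
    (ℙ {ω | ∀ i, i ≠ j → X i ω < X j ω}).toReal =
      Real.exp (μ j) / ∑ i, Real.exp (μ i) := by
  classical
  set c : Fin n → ℝ := fun i => Real.exp (μ i) with hcdef
  have hcpos : ∀ i, 0 < c i := fun i => Real.exp_pos _
  have hIic : ∀ i x, Measure.map (X i) ℙ (Set.Iic x) = ENNReal.ofReal (gCdf (c i) x) := by
    intro i x
    rw [Measure.map_apply (hmeas i) measurableSet_Iic]
    have h1 : (ℙ (X i ⁻¹' Set.Iic x)).toReal = gCdf (c i) x := by
      rw [hcdf i x]
      unfold gCdf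
      congr 2
      rw [show -(x - μ i) = μ i + -x by ring, Real.exp_add]
    rw [← h1, ENNReal.ofReal_toReal (measure_ne_top _ _)]
  have hν : ∀ i, Measure.map (X i) ℙ = volume.withDensity (fun x => ENNReal.ofReal (gPdf (c i) x)) :=
    fun i => by
      haveI : IsProbabilityMeasure (Measure.map (X i) ℙ) :=
        Measure.isProbabilityMeasure_map (hmeas i).aemeasurable
      exact gumbel_measure_eq (hcpos i) (Measure.map (X i) ℙ) (hIic i)
  have hIioP : ∀ i x, ℙ (X i ⁻¹' Set.Iio x) = ENNReal.ofReal (gCdf (c i) x) := by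
    intro i x
    rw [← Measure.map_apply (hmeas i) measurableSet_Iio]
    have hsing : Measure.map (X i) ℙ {x} = 0 := by
      rw [hν i, withDensity_apply _ (measurableSet_singleton x),
        Measure.restrict_eq_zero.mpr (by simp), lintegral_zero_measure]
    have hsplit : Measure.map (X i) ℙ (Set.Iic x) = Measure.map (X i) ℙ (Set.Iio x) + Measure.map (X i) ℙ {x} := by
      rw [← measure_union (Set.disjoint_singleton_right.mpr (by simp))
        (measurableSet_singleton x), Set.Iio_union_right]
    rw [hsing, add_zero] at hsplit
    rw [← hsplit, hIic]
  -- independence of X j and the other coordinates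
  set Z : Ω → ({i : Fin n // i ≠ j} → ℝ) := fun ω i => X i.1 ω with hZdef
  have hZmeas : Measurable Z := measurable_pi_iff.mpr fun i => hmeas i.1
  have hindepZ : IndepFun (X j) Z ℙ := by
    have h := hindep.indepFun_finset {j} {j}ᶜ (by simp) hmeas
    have hφ : Measurable fun g : (({j} : Finset (Fin n)) → ℝ) => g ⟨j, by simp⟩ :=
      measurable_pi_apply _
    have hψ : Measurable fun (g : (({j}ᶜ : Finset (Fin n)) → ℝ)) (i : {i : Fin n // i ≠ j}) =>
        g ⟨i.1, by simp [i.2]⟩ :=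
      measurable_pi_iff.mpr fun i => measurable_pi_apply _
    exact h.comp hφ hψ
  have hmapT : Measure.map (fun ω => (X j ω, Z ω)) ℙ = (Measure.map (X j) ℙ).prod (Measure.map Z ℙ) :=
    (indepFun_iff_map_prod_eq_prod_map_map (hmeas j).aemeasurable hZmeas.aemeasurable).mp hindepZ
  set S : Set (ℝ × ({i : Fin n // i ≠ j} → ℝ)) := {p | ∀ i, p.2 i < p.1} with hSdef
  have hSmeas : MeasurableSet S := by
    have hrw : S = ⋂ i, {p : ℝ × ({i : Fin n // i ≠ j} → ℝ) | p.2 i < p.1} := by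
      ext p; simp [hSdef, Set.mem_iInter]
    rw [hrw]
    exact MeasurableSet.iInter fun i =>
      measurableSet_lt (by fun_prop) (by fun_prop)
  have hEvent : {ω | ∀ i, i ≠ j → X i ω < X j ω} = (fun ω => (X j ω, Z ω)) ⁻¹' S := by
    ext ω
    simp only [Set.mem_setOf_eq, Set.mem_preimage, hSdef, hZdef]
    exact ⟨fun h i => h i.1 i.2, fun h i hi => h ⟨i, hi⟩⟩
  set b : ℝ := ∑ i ∈ Finset.univ.erase j, c i with hbdef
  have hbnn : 0 ≤ b := Finset.sum_nonneg fun i _ => (hcpos i).le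
  have hbc : 0 < b + c j := add_pos_of_nonneg_of_pos hbnn (hcpos j)
  have hfiber : ∀ x : ℝ, Measure.map Z ℙ (Prod.mk x ⁻¹' S) = ENNReal.ofReal (gCdf b x) := by
    intro x
    have hset : Prod.mk x ⁻¹' S
        = Set.pi Set.univ (fun _ : {i : Fin n // i ≠ j} => Set.Iio x) := by
      ext g; simp [hSdef]
    rw [Measure.map_apply hZmeas
      (by rw [hset]; exact MeasurableSet.univ_pi fun _ => measurableSet_Iio)]
    have hpre : Z ⁻¹' (Prod.mk x ⁻¹' S)
        = ⋂ i, X i ⁻¹' (if i = j then Set.univ else Set.Iio x) := by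
      ext ω
      simp only [Set.mem_preimage, hSdef, hZdef, Set.mem_setOf_eq, Set.mem_iInter]
      constructor
      · intro h i
        by_cases hij : i = j
        · simp [hij]
        · simpa [hij] using h ⟨i, hij⟩
      · intro h i
        have := h i.1
        simpa [i.2] using this
    rw [hpre, hindep.meas_iInter (fun i => ⟨if i = j then Set.univ else Set.Iio x, by
        split_ifs
        exacts [MeasurableSet.univ, measurableSet_Iio], rfl⟩)]
    have hval : ∀ i : Fin n, ℙ (X i ⁻¹' (if i = j then Set.univ else Set.Iio x))
        = if i = j then 1 else ENNReal.ofReal (gCdf (c i) x) := by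
      intro i; split_ifs with hij
      · simp
      · exact hIioP i x
    have h0 : (if j = j then (1:ENNReal) else ENNReal.ofReal (gCdf (c j) x)) = 1 := by simp
    have h1 : (∏ i : Fin n, if i = j then (1:ENNReal) else ENNReal.ofReal (gCdf (c i) x))
        = ∏ i ∈ Finset.univ.erase j, ENNReal.ofReal (gCdf (c i) x) := by
      rw [← Finset.prod_erase (f := fun i => if i = j then (1:ENNReal) else ENNReal.ofReal (gCdf (c i) x)) Finset.univ h0]
      exact Finset.prod_congr rfl fun i hi => if_neg (Finset.ne_of_mem_erase hi)
    calc (∏ i : Fin n, ℙ (X i ⁻¹' if i = j then Set.univ else Set.Iio x))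
        = ∏ i : Fin n, (if i = j then 1 else ENNReal.ofReal (gCdf (c i) x)) :=
          Finset.prod_congr rfl fun i _ => hval i
      _ = ∏ i ∈ Finset.univ.erase j, ENNReal.ofReal (gCdf (c i) x) := h1
      _ = ENNReal.ofReal (∏ i ∈ Finset.univ.erase j, gCdf (c i) x) :=
          (ENNReal.ofReal_prod_of_nonneg fun i _ => gCdf_nonneg (c i) x).symm
      _ = ENNReal.ofReal (gCdf b x) := by rw [gCdf_prod]
  haveI : IsProbabilityMeasure (Measure.map Z ℙ) :=
    Measure.isProbabilityMeasure_map (μ := ℙ) hZmeas.aemeasurable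
  have key : ℙ {ω | ∀ i, i ≠ j → X i ω < X j ω} = ENNReal.ofReal (c j / (b + c j)) := by
    rw [hEvent, ← Measure.map_apply ((hmeas j).prodMk hZmeas) hSmeas, hmapT,
      Measure.prod_apply hSmeas, lintegral_congr fun x => hfiber x, hν j,
      lintegral_withDensity_eq_lintegral_mul _
        ((continuous_gPdf (c j)).measurable.ennreal_ofReal)
        ((continuous_gCdf b).measurable.ennreal_ofReal)]
    simp only [Pi.mul_apply]
    have heq : ∀ x : ℝ, ENNReal.ofReal (gPdf (c j) x) * ENNReal.ofReal (gCdf b x)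
        = ENNReal.ofReal (c j / (b + c j) * gPdf (b + c j) x) := by
      intro x
      rw [← ENNReal.ofReal_mul (gPdf_nonneg (hcpos j).le x), gPdf_mul_gCdf hbnn (hcpos j) x]
    rw [lintegral_congr heq,
      ← ofReal_integral_eq_lintegral_ofReal ((integrable_gPdf hbc).const_mul _)
        (Filter.Eventually.of_forall fun x =>
          mul_nonneg (div_nonneg (hcpos j).le hbc.le) (gPdf_nonneg hbc.le x)),
      integral_const_mul, integral_gPdf hbc, mul_one]
  rw [key, ENNReal.toReal_ofReal (div_nonneg (hcpos j).le hbc.le)]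
  have hsum : b + c j = ∑ i, c i := Finset.sum_erase_add _ _ (Finset.mem_univ j)
  rw [hsum]
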